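/- arXiv:1204.6311 — 3 statements merged into one kernel-verified Lean document; each statement's English description precedes it below -/
import Mathlib

section
/- Let c be real. If 1 < c ≤ 2, then the filled-in Julia set K(c) equals the straight line segment joining -2i/c and 0, i.e. K(c) = { t·(-2i/c) : t ∈ [0,1] }. If -2 ≤ c < -1, then K(c) equals the straight line segment joining -2i/(c·(1+c)) and -2i/(1+c). -/
/-- The twisted tent map with folding line `Im z = -1`. -/
noncomputable def ttm (c : ℂ) (z : ℂ) : ℂ :=
  if -1 ≤ (c * z).im then c * z else (starRingEnd ℂ) (c * z) - 2 * Complex.I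

/-- The filled-in Julia set: points with bounded forward orbit. -/
def ttmK (c : ℂ) : Set ℂ :=
  {z : ℂ | Bornology.IsBounded (Set.range fun n : ℕ => (ttm c)^[n] z)}

open Set Bornology

/-- The real tent-like map induced on imaginary parts. -/
noncomputable def ttg (c y : ℝ) : ℝ := if -1 ≤ c * y then c * y else -(c * y) - 2

lemma ttm_re (c : ℝ) (z : ℂ) : (ttm c z).re = c * z.re := by
  unfold ttm
  split_ifs <;> simp

lemma ttm_im (c : ℝ) (z : ℂ) : (ttm c z).im = ttg c z.im := by
  unfold ttm ttg
  have him : ((c : ℂ) * z).im = c * z.im := by simp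
  rw [him]
  split_ifs with h <;> simp

lemma ttm_iter_re (c : ℝ) (z : ℂ) (n : ℕ) : ((ttm c)^[n] z).re = c ^ n * z.re := by
  induction n with
  | zero => simp
  | succ n ih =>
      rw [Function.iterate_succ_apply', ttm_re, ih, pow_succ]; ring

lemma ttm_iter_im (c : ℝ) (z : ℂ) (n : ℕ) : ((ttm c)^[n] z).im = (ttg c)^[n] z.im := by
  induction n with
  | zero => simp
  | succ n ih =>
      rw [Function.iterate_succ_apply', Function.iterate_succ_apply', ttm_im, ih]

lemma ttg_unbounded (c hi : ℝ) (hc : 1 < |c|)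
    (htop : ∀ y, hi < y → ttg c y = hi + |c| * (y - hi)) (y : ℝ) (hy : hi < y) :
    ¬ IsBounded (Set.range fun n => (ttg c)^[n] y) := by
  have hq0 : (0:ℝ) < |c| := lt_trans one_pos hc
  have key : ∀ n, hi + |c| ^ n * (y - hi) ≤ (ttg c)^[n] y := by
    intro n
    induction n with
    | zero => simp
    | succ n ih =>
        have hpow : (0:ℝ) < |c| ^ n := pow_pos hq0 n
        have h1 : hi < (ttg c)^[n] y := by nlinarith
        rw [Function.iterate_succ_apply', htop _ h1, pow_succ]
        nlinarith
  intro hb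
  rw [isBounded_iff_forall_norm_le] at hb
  obtain ⟨C, hC⟩ := hb
  obtain ⟨n, hn⟩ := pow_unbounded_of_one_lt ((C - hi) / (y - hi)) hc
  have hyhi : (0:ℝ) < y - hi := by linarith
  have h2 : C - hi < |c| ^ n * (y - hi) := by
    rw [div_lt_iff₀ hyhi] at hn; linarith
  have h3 := hC _ ⟨n, rfl⟩
  rw [Real.norm_eq_abs] at h3
  have := key n
  have := abs_le.mp h3
  linarith [this.2]

lemma ttg_bounded_iff (c lo hi : ℝ) (hc : 1 < |c|) (hlohi : lo ≤ hi)
    (hinv : ∀ y ∈ Icc lo hi, ttg c y ∈ Icc lo hi)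
    (htop : ∀ y, hi < y → ttg c y = hi + |c| * (y - hi))
    (hbot : ∀ y, y < lo → hi < ttg c y) (y : ℝ) :
    IsBounded (Set.range fun n => (ttg c)^[n] y) ↔ y ∈ Icc lo hi := by
  constructor
  · intro hb
    by_contra hy
    simp only [mem_Icc, not_and_or, not_le] at hy
    rcases hy with h | h
    ·
      have h1 : hi < ttg c y := hbot y h
      have hsub : (Set.range fun n => (ttg c)^[n] (ttg c y)) ⊆
          Set.range fun n => (ttg c)^[n] y := by
        rintro _ ⟨n, rfl⟩
        exact ⟨n + 1, (Function.iterate_succ_apply (ttg c) n y).symm⟩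
      exact ttg_unbounded c hi hc htop _ h1 (hb.subset hsub)
    · exact ttg_unbounded c hi hc htop y h hb
  · intro hy
    have key : ∀ n, (ttg c)^[n] y ∈ Icc lo hi := by
      intro n
      induction n with
      | zero => simpa
      | succ n ih => rw [Function.iterate_succ_apply']; exact hinv _ ih
    exact (Metric.isBounded_Icc lo hi).subset (by rintro _ ⟨n, rfl⟩; exact key n)

lemma mem_ttmK_iff (c : ℝ) (hc : 1 < |c|) (z : ℂ) :
    z ∈ ttmK c ↔ z.re = 0 ∧ IsBounded (Set.range fun n => (ttg c)^[n] z.im) := by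
  constructor
  · intro hz
    rw [ttmK, mem_setOf_eq, isBounded_iff_forall_norm_le] at hz
    obtain ⟨C, hC⟩ := hz
    have hre : z.re = 0 := by
      by_contra hx
      obtain ⟨n, hn⟩ := pow_unbounded_of_one_lt (C / |z.re|) hc
      have hx0 : (0:ℝ) < |z.re| := abs_pos.mpr hx
      have h1 : C < |c| ^ n * |z.re| := by rw [div_lt_iff₀ hx0] at hn; linarith
      have h2 := hC _ ⟨n, rfl⟩
      have h3 : |((ttm c)^[n] z).re| ≤ ‖(ttm c)^[n] z‖ := Complex.abs_re_le_norm _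
      rw [ttm_iter_re, abs_mul, abs_pow] at h3
      linarith
    refine ⟨hre, ?_⟩
    rw [isBounded_iff_forall_norm_le]
    refine ⟨C, ?_⟩
    rintro _ ⟨n, rfl⟩
    have h3 : |((ttm c)^[n] z).im| ≤ ‖(ttm c)^[n] z‖ := Complex.abs_im_le_norm _
    rw [ttm_iter_im] at h3
    rw [Real.norm_eq_abs]
    exact le_trans h3 (hC _ ⟨n, rfl⟩)
  · rintro ⟨hre, hb⟩
    rw [isBounded_iff_forall_norm_le] at hb
    obtain ⟨C, hC⟩ := hb
    rw [ttmK, mem_setOf_eq, isBounded_iff_forall_norm_le]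
    refine ⟨C, ?_⟩
    rintro _ ⟨n, rfl⟩
    have h1 : ‖(ttm c)^[n] z‖ ≤ |((ttm c)^[n] z).re| + |((ttm c)^[n] z).im| :=
      Complex.norm_le_abs_re_add_abs_im _
    rw [ttm_iter_re, ttm_iter_im, hre, mul_zero, abs_zero, zero_add] at h1
    exact le_trans h1 (by simpa [Real.norm_eq_abs] using hC _ ⟨n, rfl⟩)

lemma segment_im (a b : ℝ) :
    segment ℝ ((a : ℂ) * Complex.I) ((b : ℂ) * Complex.I)
      = {z : ℂ | z.re = 0 ∧ z.im ∈ segment ℝ a b} := by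
  ext z
  constructor
  · rintro ⟨u, v, hu, hv, huv, rfl⟩
    refine ⟨by simp [Complex.real_smul], u, v, hu, hv, huv, ?_⟩
    simp [Complex.real_smul]
  · rintro ⟨hre, u, v, hu, hv, huv, him⟩
    refine ⟨u, v, hu, hv, huv, ?_⟩
    apply Complex.ext <;> simp [Complex.real_smul, hre, ← him]

theorem ttmK_real_param_segment (c : ℝ) :
    (1 < c → c ≤ 2 →
      ttmK (c : ℂ) = segment ℝ (-2 * Complex.I / (c : ℂ)) 0) ∧
    (-2 ≤ c → c < -1 →
      ttmK (c : ℂ) =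
        segment ℝ (-2 * Complex.I / ((c : ℂ) * (1 + (c : ℂ)))) (-2 * Complex.I / (1 + (c : ℂ)))) := by
  constructor
  · intro h1 h2
    have hc0 : (0:ℝ) < c := by linarith
    have hc : 1 < |c| := by rw [abs_of_pos hc0]; exact h1
    have habs : |c| = c := abs_of_pos hc0
    set lo : ℝ := -2 / c with hlo_def
    have hlo : c * lo = -2 := by rw [hlo_def]; field_simp; try ring
    have hlo1 : lo ≤ -1 := by nlinarith
    have hnec : (c : ℂ) ≠ 0 := by exact_mod_cast hc0.ne'
    have hep1 : -2 * Complex.I / (c : ℂ) = ((lo : ℝ) : ℂ) * Complex.I := by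
      rw [hlo_def]; push_cast; field_simp; try ring
    have hep2 : (0 : ℂ) = (((0 : ℝ)) : ℂ) * Complex.I := by simp
    rw [hep1, hep2, segment_im, segment_eq_Icc (show lo ≤ (0:ℝ) by linarith)]
    ext z
    rw [mem_ttmK_iff c hc, Set.mem_setOf_eq]
    have key := ttg_bounded_iff c lo 0 hc (by linarith)
      (fun y hy => by
        have hy1 := hy.1
        have hy2 := hy.2
        have hcylo : -2 ≤ c * y := by
          nlinarith [mul_nonneg (sub_nonneg.mpr hy1) hc0.le]
        unfold ttg
        split_ifs with h
        · exact Set.mem_Icc.mpr ⟨by linarith,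
            mul_nonpos_of_nonneg_of_nonpos hc0.le hy2⟩
        · push_neg at h
          exact Set.mem_Icc.mpr ⟨by linarith, by linarith⟩)
      (fun y hy => by
        have : (0:ℝ) < c * y := mul_pos hc0 hy
        unfold ttg
        rw [if_pos (by linarith), habs]; ring)
      (fun y hy => by
        have hcy : c * y < -2 := by
          nlinarith [mul_pos hc0 (show (0:ℝ) < lo - y by linarith)]
        unfold ttg
        rw [if_neg (by push_neg; linarith)]
        linarith) z.im
    rw [key]
  · intro h1 h2
    have hcneg : c < 0 := by linarith
    have hc : 1 < |c| := by rw [abs_of_neg hcneg]; linarith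
    have habs : |c| = -c := abs_of_neg hcneg
    have h1c : 1 + c < 0 := by linarith
    have hcc : 0 < c * (1 + c) := mul_pos_of_neg_of_neg hcneg h1c
    have hne1r : (1 + c : ℝ) ≠ 0 := by linarith
    have hnecr : (c : ℝ) ≠ 0 := hcneg.ne
    set lo : ℝ := -2 / (c * (1 + c)) with hlo_def
    set hi : ℝ := -2 / (1 + c) with hhi_def
    have hlo : c * (1 + c) * lo = -2 := by rw [hlo_def]; field_simp; try ring
    have hhi : (1 + c) * hi = -2 := by rw [hhi_def]; field_simp; try ring
    have hclo : c * lo = hi := by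
      rw [hlo_def, hhi_def]; field_simp; try ring
    have hlo1 : lo ≤ -1 := by
      nlinarith [mul_nonneg (show (0:ℝ) ≤ c + 2 by linarith)
        (show (0:ℝ) ≤ 1 - c by linarith)]
    have hhi2 : 2 ≤ hi := by nlinarith
    have hlohi : lo ≤ hi := by linarith
    have hne1 : (1 + (c:ℂ)) ≠ 0 := by
      intro h
      apply hne1r
      exact_mod_cast congrArg Complex.re h
    have hnec : (c : ℂ) ≠ 0 := by exact_mod_cast hnecr
    have hep1 : -2 * Complex.I / ((c : ℂ) * (1 + (c:ℂ))) = ((lo : ℝ) : ℂ) * Complex.I := by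
      rw [hlo_def]; push_cast; field_simp; try ring
    have hep2 : -2 * Complex.I / (1 + (c:ℂ)) = ((hi : ℝ) : ℂ) * Complex.I := by
      rw [hhi_def]; push_cast; field_simp; try ring
    rw [hep1, hep2, segment_im, segment_eq_Icc hlohi]
    ext z
    rw [mem_ttmK_iff c hc, Set.mem_setOf_eq]
    have key := ttg_bounded_iff c lo hi hc hlohi
      (fun y hy => by
        have hy1 := hy.1
        have hy2 := hy.2
        have hup : c * y ≤ hi := by
          nlinarith [mul_nonneg (sub_nonneg.mpr hy1) (show (0:ℝ) ≤ -c by linarith)]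
        unfold ttg
        split_ifs with h
        · exact Set.mem_Icc.mpr ⟨by linarith, hup⟩
        · push_neg at h
          refine Set.mem_Icc.mpr ⟨by linarith, ?_⟩
          nlinarith [mul_nonneg (sub_nonneg.mpr hy2) (show (0:ℝ) ≤ -c by linarith)])
      (fun y hy => by
        have hchi : c * hi = -2 - hi := by nlinarith
        have hcy : c * y < -1 := by
          nlinarith [mul_pos (show (0:ℝ) < y - hi by linarith)
            (show (0:ℝ) < -c by linarith)]
        unfold ttg
        rw [if_neg (by push_neg; linarith), habs]
        linear_combination -hhi)
      (fun y hy => by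
        have hcy : hi < c * y := by
          nlinarith [mul_pos (show (0:ℝ) < lo - y by linarith)
            (show (0:ℝ) < -c by linarith)]
        unfold ttg
        rw [if_pos (by linarith)]
        exact hcy) z.im
    rw [key]
end

section
/- Suppose |c| > 1. If every connected component of K(c) contains more than one point, and K(c) ∩ FL is a connected set (where FL = {z ∈ ℂ : Im(z) = -1} is the folding line), then K(c) is connected. -/
open Set Complex Bornology

lemma ttm_of_le {c z : ℂ} (h : -1 ≤ (c * z).im) : ttm c z = c * z := if_pos h

lemma reflect_im (w : ℂ) : ((starRingEnd ℂ) w - 2 * Complex.I).im = -w.im - 2 := by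
  simp only [Complex.sub_im, Complex.conj_im, Complex.mul_im, Complex.I_im, Complex.I_re,
    Complex.re_ofNat, Complex.im_ofNat]
  ring

lemma reflect_eq_self {w : ℂ} (h : w.im = -1) : (starRingEnd ℂ) w - 2 * Complex.I = w := by
  apply Complex.ext
  · simp
  · rw [reflect_im, h]; norm_num

lemma ttm_of_le' {c z : ℂ} (h : (c * z).im ≤ -1) :
    ttm c z = (starRingEnd ℂ) (c * z) - 2 * Complex.I := by
  rcases lt_or_eq_of_le h with h' | h'
  · exact if_neg (not_le.2 h')
  · rw [ttm_of_le h'.ge]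
    exact (reflect_eq_self h').symm

lemma ttm_continuous (c : ℂ) : Continuous (ttm c) := by
  unfold ttm
  refine Continuous.if_le ?_ ?_ continuous_const ?_ ?_
  · exact continuous_const.mul continuous_id
  · exact ((Complex.continuous_conj.comp (continuous_const.mul continuous_id)).sub continuous_const)
  · exact (Complex.continuous_im.comp (continuous_const.mul continuous_id))
  · intro x hx
    exact (reflect_eq_self hx.symm).symm

lemma neg_one_le_im_ttm (c z : ℂ) : -1 ≤ (ttm c z).im := by
  unfold ttm
  split_ifs with h
  · exact h
  · push_neg at h
    rw [reflect_im]
    linarith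

lemma ttm_apply_div {c : ℂ} (hc : c ≠ 0) {w : ℂ} (hw : -1 ≤ w.im) : ttm c (w / c) = w := by
  have hcw : c * (w / c) = w := mul_div_cancel₀ w hc
  rw [ttm, hcw, if_pos hw]

lemma ttm_apply_div' {c : ℂ} (hc : c ≠ 0) {w : ℂ} (hw : -1 ≤ w.im) :
    ttm c (((starRingEnd ℂ) w - 2 * Complex.I) / c) = w := by
  set u : ℂ := (starRingEnd ℂ) w - 2 * Complex.I with hu
  have hcu : c * (u / c) = u := mul_div_cancel₀ u hc
  have him : u.im ≤ -1 := by rw [hu, reflect_im]; linarith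
  rw [ttm_of_le' (by rw [hcu]; exact him), hcu, hu]
  apply Complex.ext
  · simp
  · rw [reflect_im, reflect_im]; ring

lemma mem_ttmK_iff_s10 {c z : ℂ} : z ∈ ttmK c ↔ ttm c z ∈ ttmK c := by
  simp only [ttmK, Set.mem_setOf_eq]
  constructor
  · intro hz
    refine hz.subset ?_
    rintro _ ⟨n, rfl⟩
    exact ⟨n + 1, (Function.iterate_succ_apply (ttm c) n z).symm⟩
  · intro hz
    have hsub : (Set.range fun n : ℕ => (ttm c)^[n] z) ⊆
        insert z (Set.range fun n : ℕ => (ttm c)^[n] (ttm c z)) := by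
      rintro _ ⟨n, rfl⟩
      cases n with
      | zero => exact Or.inl rfl
      | succ m => exact Or.inr ⟨m, (Function.iterate_succ_apply (ttm c) m z).symm⟩
    exact (hz.insert z).subset hsub

lemma iterate_mem_ttmK {c z : ℂ} (hz : z ∈ ttmK c) (n : ℕ) : (ttm c)^[n] z ∈ ttmK c := by
  induction n with
  | zero => exact hz
  | succ m ih => rw [Function.iterate_succ_apply']; exact mem_ttmK_iff_s10.mp ih

lemma zero_mem_ttmK (c : ℂ) : (0 : ℂ) ∈ ttmK c := by
  have h0 : ttm c 0 = 0 := by rw [ttm]; simp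
  have hit : ∀ n : ℕ, (ttm c)^[n] (0 : ℂ) = 0 := by
    intro n; induction n with
    | zero => rfl
    | succ m ih => rw [Function.iterate_succ_apply', ih, h0]
  have hsub : (Set.range fun n : ℕ => (ttm c)^[n] (0:ℂ)) ⊆ {0} := by
    rintro _ ⟨n, rfl⟩; simp [hit n]
  exact (Bornology.isBounded_singleton).subset hsub

lemma abs_ttm_add_I (c z : ℂ) :
    ‖c‖ * ‖z + Complex.I‖ - ‖1 - c‖
      ≤ ‖ttm c z + Complex.I‖ := by
  have key : ‖c‖ * ‖z + Complex.I‖ - ‖1 - c‖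
      ≤ ‖c * z + Complex.I‖ := by
    have hid : c * (z + Complex.I) = (c * z + Complex.I) - Complex.I * (1 - c) := by ring
    have hle := norm_sub_le (c * z + Complex.I) (Complex.I * (1 - c))
    rw [← hid] at hle
    rw [norm_mul, norm_mul, Complex.norm_I, one_mul] at hle
    linarith
  unfold ttm
  split_ifs with hbr
  · exact key
  · have hconj : (starRingEnd ℂ) (c * z) - 2 * Complex.I + Complex.I
        = (starRingEnd ℂ) (c * z + Complex.I) := by
      apply Complex.ext
      · simp
      · simp only [Complex.add_im, reflect_im, Complex.conj_im, Complex.I_im]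
        ring
    rw [hconj, Complex.norm_conj]
    exact key

lemma reflect_invol (w : ℂ) :
    (starRingEnd ℂ) ((starRingEnd ℂ) w - 2 * Complex.I) - 2 * Complex.I = w := by
  apply Complex.ext
  · simp
  · rw [reflect_im, reflect_im]; ring

lemma abs_add_I_iterate {c : ℂ} (h : 1 < ‖c‖) {z : ℂ}
    (n : ℕ) :
    (‖z + Complex.I‖ - ‖1 - c‖ / (‖c‖ - 1)) * (‖c‖) ^ n
      + ‖1 - c‖ / (‖c‖ - 1) ≤ ‖(ttm c)^[n] z + Complex.I‖ := by
  set s : ℝ := ‖1 - c‖ / (‖c‖ - 1) with hs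
  have hsb : s * (‖c‖ - 1) = ‖1 - c‖ := by
    rw [hs, div_mul_cancel₀ _ (by linarith : ‖c‖ - 1 ≠ 0)]
  induction n with
  | zero => simp
  | succ m ih =>
    rw [Function.iterate_succ_apply']
    have hstep := abs_ttm_add_I c ((ttm c)^[m] z)
    have hc0 : (0:ℝ) < ‖c‖ := by linarith
    have := mul_le_mul_of_nonneg_left ih hc0.le
    rw [pow_succ]
    nlinarith [this, hstep]

lemma ttmK_subset_closedBall {c : ℂ} (h : 1 < ‖c‖) :
    ttmK c ⊆ Metric.closedBall (-Complex.I) (‖1 - c‖ / (‖c‖ - 1)) := by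
  set s : ℝ := ‖1 - c‖ / (‖c‖ - 1) with hs
  intro z hz
  by_contra hball
  rw [Metric.mem_closedBall, Complex.dist_eq, sub_neg_eq_add, not_le] at hball
  simp only [ttmK, Set.mem_setOf_eq, isBounded_iff_forall_norm_le] at hz
  obtain ⟨C, hC⟩ := hz
  set d : ℝ := ‖z + Complex.I‖ - s with hd
  have hd0 : 0 < d := by rw [hd]; linarith
  obtain ⟨n, hn⟩ := pow_unbounded_of_one_lt ((C + 1 - s) / d) h
  have hn' : C + 1 - s < d * (‖c‖) ^ n := by
    rw [div_lt_iff₀ hd0] at hn; linarith [hn]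
  have hiter := abs_add_I_iterate h (z := z) n
  have hnorm : ‖(ttm c)^[n] z + Complex.I‖ ≤ ‖(ttm c)^[n] z‖ + 1 := by
    have := norm_add_le ((ttm c)^[n] z) Complex.I
    simpa using this
  have hCn := hC ((ttm c)^[n] z) ⟨n, rfl⟩
  rw [← hd, ← hs] at hiter
  linarith

lemma ttmK_isCompact {c : ℂ} (h : 1 < ‖c‖) : IsCompact (ttmK c) := by
  set s : ℝ := ‖1 - c‖ / (‖c‖ - 1) with hs
  have hEq : ttmK c = ⋂ n : ℕ, (fun z => (ttm c)^[n] z) ⁻¹' (Metric.closedBall (-Complex.I) s) := by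
    apply Set.Subset.antisymm
    · intro z hz
      simp only [Set.mem_iInter, Set.mem_preimage]
      intro n
      exact ttmK_subset_closedBall h (iterate_mem_ttmK hz n)
    · intro z hz
      simp only [Set.mem_iInter, Set.mem_preimage, Metric.mem_closedBall, Complex.dist_eq,
        sub_neg_eq_add] at hz
      simp only [ttmK, Set.mem_setOf_eq, isBounded_iff_forall_norm_le]
      refine ⟨s + 1, ?_⟩
      rintro _ ⟨n, rfl⟩
      have h1 := hz n
      have h2 : ‖(ttm c)^[n] z‖ ≤ ‖(ttm c)^[n] z + Complex.I‖ + 1 := by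
        have := norm_sub_le ((ttm c)^[n] z + Complex.I) Complex.I
        simpa using this
      linarith
  rw [Metric.isCompact_iff_isClosed_bounded]
  constructor
  · rw [hEq]
    exact isClosed_iInter fun n =>
      (Metric.isClosed_closedBall).preimage ((ttm_continuous c).iterate n)
  · exact (Metric.isBounded_closedBall).subset (ttmK_subset_closedBall h)

lemma ttm_dist_of_le {c a b : ℂ} (ha : (c * a).im ≤ -1) (hb : (c * b).im ≤ -1) :
    dist (ttm c a) (ttm c b) = ‖c‖ * dist a b := by
  rw [ttm_of_le' ha, ttm_of_le' hb, Complex.dist_eq, Complex.dist_eq]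
  have : (starRingEnd ℂ) (c * a) - 2 * Complex.I - ((starRingEnd ℂ) (c * b) - 2 * Complex.I)
      = (starRingEnd ℂ) (c * a - c * b) := by
    rw [map_sub]; ring
  rw [this, Complex.norm_conj, ← mul_sub, norm_mul]

lemma ttm_dist_of_ge {c a b : ℂ} (ha : -1 ≤ (c * a).im) (hb : -1 ≤ (c * b).im) :
    dist (ttm c a) (ttm c b) = ‖c‖ * dist a b := by
  rw [ttm_of_le ha, ttm_of_le hb, Complex.dist_eq, Complex.dist_eq, ← mul_sub, norm_mul]

lemma comp_meets_line {C : Set ℂ} (hCc : IsCompact C) (hCp : IsPreconnected C)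
    {L : Set ℂ} (hLC : L ⊆ C) (hLne : L.Nonempty) (hline : ∀ z ∈ C, z.im = -1 → z ∈ L)
    {w : ℂ} (hw : w ∈ C) (hwim : -1 ≤ w.im) :
    (connectedComponentIn (C ∩ {z : ℂ | -1 ≤ z.im}) w ∩ L).Nonempty := by
  set A : Set ℂ := C ∩ {z : ℂ | -1 ≤ z.im} with hA
  have hwA : w ∈ A := ⟨hw, hwim⟩
  by_cases hbelow : ∃ y ∈ C, y.im < -1
  · obtain ⟨y, hyC, hyim⟩ := hbelow
    have hAcomp : IsCompact A :=
      hCc.inter_right (isClosed_le continuous_const Complex.continuous_im)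
    haveI : CompactSpace ↥A := isCompact_iff_compactSpace.mp hAcomp
    by_contra hEmpty
    rw [Set.not_nonempty_iff_eq_empty] at hEmpty
    set x₁ : ↥A := ⟨w, hwA⟩ with hx₁
    set F : Set ↥A := {a : ↥A | (a : ℂ).im = -1} with hF
    have hFclosed : IsClosed F :=
      isClosed_eq (Complex.continuous_im.comp continuous_subtype_val) continuous_const
    have hdisj : ∀ a ∈ F, a ∉ connectedComponent x₁ := by
      intro a haF hacc
      have hmem : (a : ℂ) ∈ connectedComponentIn A w := by
        rw [connectedComponentIn_eq_image hwA]
        exact ⟨a, hacc, rfl⟩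
      have haL : (a : ℂ) ∈ L := hline _ a.2.1 haF
      exact Set.eq_empty_iff_forall_notMem.mp hEmpty _ ⟨hmem, haL⟩
    have hcover : F ⊆ ⋃ s : {s : Set ↥A // IsClopen s ∧ x₁ ∈ s}, (↑s : Set ↥A)ᶜ := by
      intro a haF
      have := hdisj a haF
      rw [connectedComponent_eq_iInter_isClopen] at this
      simp only [Set.mem_iInter, not_forall] at this
      obtain ⟨s, hs⟩ := this
      exact Set.mem_iUnion.mpr ⟨s, hs⟩
    obtain ⟨t, ht⟩ := (hFclosed.isCompact).elim_finite_subcover _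
      (fun s : {s : Set ↥A // IsClopen s ∧ x₁ ∈ s} => s.2.1.compl.isOpen) hcover
    set Wb : Set ↥A := ⋂ s ∈ t, (↑s : Set ↥A) with hWb
    have hWbclopen : IsClopen Wb := isClopen_biInter_finset (fun s _ => s.2.1)
    have hxWb : x₁ ∈ Wb := Set.mem_iInter₂.mpr fun s _ => s.2.2
    have hWbF : ∀ a ∈ Wb, a ∉ F := by
      intro a haWb haF
      obtain ⟨s, hst, hsc⟩ := Set.mem_iUnion₂.mp (ht haF)
      exact hsc (Set.mem_iInter₂.mp haWb s hst)
    set W : Set ℂ := Subtype.val '' Wb with hW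
    have hwW : w ∈ W := ⟨x₁, hxWb, rfl⟩
    have hWA : W ⊆ A := by rintro _ ⟨a, _, rfl⟩; exact a.2
    have hWclosed : IsClosed W :=
      ((hWbclopen.isClosed.isCompact).image continuous_subtype_val).isClosed
    have hWim : ∀ x ∈ W, -1 < x.im := by
      rintro _ ⟨a, haWb, rfl⟩
      rcases lt_or_eq_of_le (show (-1:ℝ) ≤ (a:ℂ).im from a.2.2) with h' | h'
      · exact h'
      · exact absurd h'.symm (hWbF a haWb)
    obtain ⟨U, hUopen, hUpre⟩ := isOpen_induced_iff.mp hWbclopen.isOpen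
    have hWAU : W = A ∩ U := by
      rw [hW, ← hUpre]
      exact Subtype.image_preimage_coe A U
    set V : Set ℂ := U ∩ {z : ℂ | -1 < z.im} with hV
    have hVopen : IsOpen V := hUopen.inter (isOpen_lt continuous_const Complex.continuous_im)
    have hWV : W = V ∩ C := by
      apply Set.Subset.antisymm
      · intro x hx
        have hxA : x ∈ A := hWA hx
        refine ⟨⟨(hWAU ▸ hx).2, hWim x hx⟩, hxA.1⟩
      · intro x hx
        obtain ⟨⟨hxU, hxim⟩, hxC⟩ := hx
        rw [hWAU]
        exact ⟨⟨hxC, Set.mem_setOf_eq ▸ le_of_lt hxim⟩, hxU⟩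
    have hsub : C ⊆ V ∪ Wᶜ := by
      intro x hx
      by_cases hxW : x ∈ W
      · exact Or.inl (hWV ▸ hxW).1
      · exact Or.inr hxW
    have hne1 : (C ∩ V).Nonempty := ⟨w, hw, (hWV ▸ hwW).1⟩
    have hne2 : (C ∩ Wᶜ).Nonempty := by
      refine ⟨y, hyC, fun hyW => ?_⟩
      exact absurd (hWA hyW).2 (not_le.mpr hyim)
    obtain ⟨p, hpC, hpV, hpWc⟩ := hCp V Wᶜ hVopen hWclosed.isOpen_compl hsub hne1 hne2
    exact hpWc (hWV ▸ (Set.mem_inter hpV hpC))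
  · push_neg at hbelow
    have hAC : A = C := Set.Subset.antisymm Set.inter_subset_left
      (fun z hz => ⟨hz, hbelow z hz⟩)
    obtain ⟨l, hl⟩ := hLne
    have hsub : C ⊆ connectedComponentIn A w := by
      rw [hAC]
      exact hCp.subset_connectedComponentIn hw (hAC ▸ Set.Subset.refl C)
    exact ⟨l, hsub (hLC hl), hl⟩

theorem ttmK_connected_of_no_trivial_components (c : ℂ) (h : 1 < ‖c‖)
    (h1 : ∀ z ∈ ttmK c, ∃ w ∈ connectedComponentIn (ttmK c) z, w ≠ z)
    (h2 : IsConnected (ttmK c ∩ {z : ℂ | z.im = -1})) :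
    IsConnected (ttmK c) := by
  have hc0 : c ≠ 0 := by
    intro h0
    rw [h0, norm_zero] at h
    linarith
  set L : Set ℂ := ttmK c ∩ {z : ℂ | z.im = -1} with hLdef
  obtain ⟨⟨l₀, hl₀⟩, hLpre⟩ := h2
  have hLK : L ⊆ ttmK c := Set.inter_subset_left
  have hKcomp : IsCompact (ttmK c) := ttmK_isCompact h
  set s : ℝ := ‖1 - c‖ / (‖c‖ - 1) with hs
  have hs0 : (0:ℝ) ≤ s := div_nonneg (norm_nonneg _) (by linarith)
  -- Claim A: every point of K eventually enters the component of some l / c, l ∈ L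
  have claimA : ∀ z ∈ ttmK c, ∃ n : ℕ, ∃ l ∈ L,
      (ttm c)^[n] z ∈ connectedComponentIn (ttmK c) (l / c) := by
    intro z hz
    by_contra hcon
    push_neg at hcon
    obtain ⟨w, hwC, hwz⟩ := h1 z hz
    have hCzsub : connectedComponentIn (ttmK c) z ⊆ ttmK c := connectedComponentIn_subset _ _
    have hd0 : 0 < dist w z := dist_pos.mpr hwz
    have hno : ∀ (n : ℕ), ∀ p ∈ connectedComponentIn (ttmK c) z,
        (c * (ttm c)^[n] p).im ≠ -1 := by
      intro n p hp him
      have hpK : p ∈ ttmK c := hCzsub hp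
      have hfnK : (ttm c)^[n] p ∈ ttmK c := iterate_mem_ttmK hpK n
      have httm : ttm c ((ttm c)^[n] p) = c * (ttm c)^[n] p := ttm_of_le (le_of_eq him.symm)
      have hlK : c * (ttm c)^[n] p ∈ ttmK c := httm ▸ mem_ttmK_iff_s10.mp hfnK
      have hlL : c * (ttm c)^[n] p ∈ L := ⟨hlK, him⟩
      have hdiv : c * (ttm c)^[n] p / c = (ttm c)^[n] p := mul_div_cancel_left₀ _ hc0
      have hSpre : IsPreconnected ((ttm c)^[n] '' connectedComponentIn (ttmK c) z) :=
        isPreconnected_connectedComponentIn.image _ ((ttm_continuous c).iterate n).continuousOn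
      have hSsub : (ttm c)^[n] '' connectedComponentIn (ttmK c) z ⊆ ttmK c := by
        rintro _ ⟨q, hq, rfl⟩
        exact iterate_mem_ttmK (hCzsub hq) n
      have hsub2 : (ttm c)^[n] '' connectedComponentIn (ttmK c) z ⊆
          connectedComponentIn (ttmK c) ((ttm c)^[n] p) :=
        hSpre.subset_connectedComponentIn ⟨p, hp, rfl⟩ hSsub
      refine hcon n _ hlL ?_
      rw [hdiv]
      exact hsub2 ⟨z, mem_connectedComponentIn hz, rfl⟩
    have hgrow : ∀ n : ℕ, dist ((ttm c)^[n] w) ((ttm c)^[n] z)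
        = (‖c‖) ^ n * dist w z := by
      intro n
      induction n with
      | zero => simp
      | succ m ih =>
        rw [Function.iterate_succ_apply', Function.iterate_succ_apply']
        have hSpre : IsPreconnected ((ttm c)^[m] '' connectedComponentIn (ttmK c) z) :=
          isPreconnected_connectedComponentIn.image _ ((ttm_continuous c).iterate m).continuousOn
        have haS : (ttm c)^[m] w ∈ (ttm c)^[m] '' connectedComponentIn (ttmK c) z :=
          ⟨w, hwC, rfl⟩
        have hbS : (ttm c)^[m] z ∈ (ttm c)^[m] '' connectedComponentIn (ttmK c) z :=
          ⟨z, mem_connectedComponentIn hz, rfl⟩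
        have hgne : ∀ x ∈ (ttm c)^[m] '' connectedComponentIn (ttmK c) z,
            (c * x).im ≠ -1 := by
          rintro _ ⟨q, hq, rfl⟩
          exact hno m q hq
        have hgcont : ContinuousOn (fun x : ℂ => (c * x).im)
            ((ttm c)^[m] '' connectedComponentIn (ttmK c) z) :=
          (Complex.continuous_im.comp (continuous_const.mul continuous_id)).continuousOn
        have hdist : dist (ttm c ((ttm c)^[m] w)) (ttm c ((ttm c)^[m] z))
            = ‖c‖ * dist ((ttm c)^[m] w) ((ttm c)^[m] z) := by
          rcases le_or_gt ((c * (ttm c)^[m] w).im) (-1) with ha | ha <;>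
            rcases le_or_gt ((c * (ttm c)^[m] z).im) (-1) with hb | hb
          · exact ttm_dist_of_le ha hb
          · exfalso
            obtain ⟨x, hxS, hgx⟩ := hSpre.intermediate_value haS hbS hgcont ⟨ha, hb.le⟩
            exact hgne x hxS hgx
          · exfalso
            obtain ⟨x, hxS, hgx⟩ := hSpre.intermediate_value hbS haS hgcont ⟨hb, ha.le⟩
            exact hgne x hxS hgx
          · exact ttm_dist_of_ge ha.le hb.le
        rw [hdist, ih, pow_succ]
        ring
    obtain ⟨n, hn⟩ := pow_unbounded_of_one_lt (2 * s / dist w z) h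
    rw [div_lt_iff₀ hd0] at hn
    have hwn : (ttm c)^[n] w ∈ Metric.closedBall (-Complex.I) s :=
      ttmK_subset_closedBall h (iterate_mem_ttmK (hCzsub hwC) n)
    have hzn : (ttm c)^[n] z ∈ Metric.closedBall (-Complex.I) s :=
      ttmK_subset_closedBall h (iterate_mem_ttmK hz n)
    rw [Metric.mem_closedBall] at hwn hzn
    have htri : dist ((ttm c)^[n] w) ((ttm c)^[n] z) ≤ 2 * s := by
      have h3 := dist_triangle ((ttm c)^[n] w) (-Complex.I) ((ttm c)^[n] z)
      rw [dist_comm (-Complex.I)] at h3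
      linarith
    rw [hgrow n] at htri
    linarith
  -- the component of 0
  have h0K : (0 : ℂ) ∈ ttmK c := zero_mem_ttmK c
  set C : Set ℂ := connectedComponentIn (ttmK c) 0 with hCdef
  have hCsub : C ⊆ ttmK c := connectedComponentIn_subset _ _
  have hCpre : IsPreconnected C := isPreconnected_connectedComponentIn
  have h0C : (0 : ℂ) ∈ C := mem_connectedComponentIn h0K
  have hcomp_eq : ∀ y ∈ C, connectedComponentIn (ttmK c) y = C :=
    fun y hy => (connectedComponentIn_eq hy).symm
  have h0fix : ttm c 0 = 0 := by rw [ttm]; simp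
  have hfC : ∀ x ∈ C, ttm c x ∈ C := by
    have himg : ttm c '' C ⊆ C := by
      refine IsPreconnected.subset_connectedComponentIn
        (hCpre.image _ (ttm_continuous c).continuousOn) ⟨0, h0C, h0fix⟩ ?_
      rintro _ ⟨q, hq, rfl⟩
      exact mem_ttmK_iff_s10.mp (hCsub hq)
    exact fun x hx => himg ⟨x, hx, rfl⟩
  have hit0 : ∀ n : ℕ, (ttm c)^[n] (0 : ℂ) = 0 := by
    intro n; induction n with
    | zero => rfl
    | succ m ih => rw [Function.iterate_succ_apply', ih, h0fix]
  obtain ⟨n₀, l, hlL, h0n⟩ := claimA 0 h0K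
  rw [hit0 n₀] at h0n
  have hlim : l.im = -1 := hlL.2
  have hlcK : l / c ∈ ttmK c := by
    rw [mem_ttmK_iff_s10, ttm_apply_div hc0 (le_of_eq hlim.symm)]
    exact hlL.1
  have hClc : connectedComponentIn (ttmK c) (l / c) = C :=
    connectedComponentIn_eq h0n
  have hlcC : l / c ∈ C := hClc ▸ mem_connectedComponentIn hlcK
  have hlC : l ∈ C := by
    have h4 := hfC _ hlcC
    rwa [ttm_apply_div hc0 (le_of_eq hlim.symm)] at h4
  have hLsubC : L ⊆ C := by
    have h5 : L ⊆ connectedComponentIn (ttmK c) l :=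
      hLpre.subset_connectedComponentIn hlL hLK
    rwa [hcomp_eq l hlC] at h5
  have hinvL : ∀ l' ∈ L, l' / c ∈ C := by
    have hmapK : ∀ l' ∈ L, l' / c ∈ ttmK c := by
      intro l' hl'
      rw [mem_ttmK_iff_s10, ttm_apply_div hc0 (le_of_eq (show l'.im = -1 from hl'.2).symm)]
      exact hl'.1
    have hTpre : IsPreconnected ((fun u : ℂ => u / c) '' L) :=
      hLpre.image _ (continuous_id.div_const c).continuousOn
    have hT : (fun u : ℂ => u / c) '' L ⊆ connectedComponentIn (ttmK c) (l / c) :=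
      hTpre.subset_connectedComponentIn ⟨l, hlL, rfl⟩
        (by rintro _ ⟨u, hu, rfl⟩; exact hmapK u hu)
    intro l' hl'
    exact hClc ▸ hT ⟨l', hl', rfl⟩
  -- pullback step
  have hCcomp : IsCompact C := by
    haveI : CompactSpace ↥(ttmK c) := isCompact_iff_compactSpace.mp hKcomp
    rw [hCdef, connectedComponentIn_eq_image h0K]
    exact (isClosed_connectedComponent.isCompact).image continuous_subtype_val
  have hline : ∀ z ∈ C, z.im = -1 → z ∈ L := fun z hz him => ⟨hCsub hz, him⟩
  have hpull : ∀ z ∈ ttmK c, ttm c z ∈ C → z ∈ C := by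
    intro z hzK hwC
    obtain ⟨l', hl'E, hl'L⟩ := comp_meets_line hCcomp hCpre hLsubC ⟨l, hlL⟩ hline hwC
      (neg_one_le_im_ttm c z)
    have hwE : ttm c z ∈ connectedComponentIn (C ∩ {x : ℂ | -1 ≤ x.im}) (ttm c z) :=
      mem_connectedComponentIn ⟨hwC, neg_one_le_im_ttm c z⟩
    have hEpre : IsPreconnected (connectedComponentIn (C ∩ {x : ℂ | -1 ≤ x.im}) (ttm c z)) :=
      isPreconnected_connectedComponentIn
    have hEsub : connectedComponentIn (C ∩ {x : ℂ | -1 ≤ x.im}) (ttm c z) ⊆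
        C ∩ {x : ℂ | -1 ≤ x.im} := connectedComponentIn_subset _ _
    rcases le_or_gt (-1 : ℝ) ((c * z).im) with hbr | hbr
    · have hzw : z = ttm c z / c := by
        rw [ttm_of_le hbr, mul_div_cancel_left₀ _ hc0]
      have hTpre : IsPreconnected ((fun u : ℂ => u / c) ''
          connectedComponentIn (C ∩ {x : ℂ | -1 ≤ x.im}) (ttm c z)) :=
        hEpre.image _ (continuous_id.div_const c).continuousOn
      have hTK : (fun u : ℂ => u / c) ''
          connectedComponentIn (C ∩ {x : ℂ | -1 ≤ x.im}) (ttm c z) ⊆ ttmK c := by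
        rintro _ ⟨u, hu, rfl⟩
        obtain ⟨huC, huim⟩ := hEsub hu
        rw [mem_ttmK_iff_s10, ttm_apply_div hc0 huim]
        exact hCsub huC
      have hT := hTpre.subset_connectedComponentIn
        (⟨l', hl'E, rfl⟩ : l' / c ∈ (fun u : ℂ => u / c) ''
          connectedComponentIn (C ∩ {x : ℂ | -1 ≤ x.im}) (ttm c z)) hTK
      have h6 := hT ⟨ttm c z, hwE, rfl⟩
      rw [hcomp_eq (l' / c) (hinvL l' hl'L)] at h6
      rwa [hzw]
    · have hzw : z = ((starRingEnd ℂ) (ttm c z) - 2 * Complex.I) / c := by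
        rw [ttm_of_le' hbr.le, reflect_invol, mul_div_cancel_left₀ _ hc0]
      have hcont : Continuous (fun u : ℂ => ((starRingEnd ℂ) u - 2 * Complex.I) / c) :=
        ((Complex.continuous_conj.sub continuous_const).div_const c)
      have hTpre : IsPreconnected ((fun u : ℂ => ((starRingEnd ℂ) u - 2 * Complex.I) / c) ''
          connectedComponentIn (C ∩ {x : ℂ | -1 ≤ x.im}) (ttm c z)) :=
        hEpre.image _ hcont.continuousOn
      have hTK : (fun u : ℂ => ((starRingEnd ℂ) u - 2 * Complex.I) / c) ''
          connectedComponentIn (C ∩ {x : ℂ | -1 ≤ x.im}) (ttm c z) ⊆ ttmK c := by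
        rintro _ ⟨u, hu, rfl⟩
        obtain ⟨huC, huim⟩ := hEsub hu
        rw [mem_ttmK_iff_s10, ttm_apply_div' hc0 huim]
        exact hCsub huC
      have hl'img : l' / c ∈ (fun u : ℂ => ((starRingEnd ℂ) u - 2 * Complex.I) / c) ''
          connectedComponentIn (C ∩ {x : ℂ | -1 ≤ x.im}) (ttm c z) := by
        refine ⟨l', hl'E, ?_⟩
        show ((starRingEnd ℂ) l' - 2 * Complex.I) / c = l' / c
        rw [reflect_eq_self (show l'.im = -1 from hl'L.2)]
      have hT := hTpre.subset_connectedComponentIn hl'img hTK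
      have h6 := hT ⟨ttm c z, hwE, rfl⟩
      rw [hcomp_eq (l' / c) (hinvL l' hl'L)] at h6
      rwa [hzw]
  -- conclude
  have hiterC : ∀ n : ℕ, ∀ z ∈ ttmK c, (ttm c)^[n] z ∈ C → z ∈ C := by
    intro n
    induction n with
    | zero => exact fun z _ hz => hz
    | succ m ih =>
      intro z hzK hmem
      rw [Function.iterate_succ_apply] at hmem
      exact hpull z hzK (ih (ttm c z) (mem_ttmK_iff_s10.mp hzK) hmem)
  have hKC : ttmK c ⊆ C := by
    intro z hz
    obtain ⟨n, l', hl'L, hn⟩ := claimA z hz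
    rw [hcomp_eq (l' / c) (hinvL l' hl'L)] at hn
    exact hiterC n z hz hn
  refine ⟨⟨0, h0K⟩, ?_⟩
  rw [Set.Subset.antisymm hKC hCsub]
  exact isPreconnected_connectedComponentIn
end

section
/- Suppose |c| > 1. Let z ∈ K(c) and let U be an open neighborhood of z. Then there exists an integer n > 0 such that the n-th image of U meets the folding line: there is a point w ∈ U with Im(f_c^n(w)) = -1. -/
noncomputable def mm (s : Bool) : ℂ → ℂ := if s then (starRingEnd ℂ) else id

lemma mm_cont (s : Bool) : Continuous (mm s) := by
  cases s <;> simp only [mm, if_true, if_false]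
  · exact continuous_id
  · exact continuous_star

lemma mm_abs (s : Bool) (x : ℂ) : ‖mm s x‖ = ‖x‖ := by
  cases s <;> simp [mm]

lemma mm_sub (s : Bool) (x y : ℂ) : mm s (x - y) = mm s x - mm s y := by
  cases s <;> simp [mm]

lemma mm_invol (s : Bool) (x : ℂ) : mm s (mm s x) = x := by
  cases s <;> simp [mm]

lemma conj_mm (s : Bool) (x : ℂ) : (starRingEnd ℂ) (mm s x) = mm (!s) x := by
  cases s <;> simp [mm]

lemma ttm_im_ge (c w : ℂ) : -1 ≤ (ttm c w).im := by
  unfold ttm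
  split
  · assumption
  · next hlt =>
    push_neg at hlt
    simp only [Complex.sub_im, Complex.conj_im, Complex.mul_im, Complex.re_ofNat,
      Complex.I_im, Complex.im_ofNat, Complex.I_re]
    simp only [Complex.mul_im] at hlt
    linarith


theorem ttm_image_meets_folding_line (c : ℂ) (h : 1 < ‖c‖) (z : ℂ)
    (hz : z ∈ ttmK c) (U : Set ℂ) (hU : IsOpen U) (hzU : z ∈ U) :
    ∃ n : ℕ, 0 < n ∧ ∃ w ∈ U, ((ttm c)^[n] w).im = -1 := by

  by_contra hcon
  push_neg at hcon
  obtain ⟨ε, hε, hBU⟩ := Metric.isOpen_iff.mp hU z hzU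
  set B := Metric.ball z ε with hBdef
  have hzB : z ∈ B := Metric.mem_ball_self hε
  have key : ∀ n : ℕ, ∃ (s : Bool) (a b : ℂ), ‖a‖ = ‖c‖ ^ n ∧
      ∀ w ∈ B, (ttm c)^[n] w = a * mm s w + b := by
    intro n
    induction n with
    | zero => exact ⟨false, 1, 0, by simp, fun w _ => by simp [mm]⟩
    | succ n ih =>
      obtain ⟨s, a, b, ha, hf⟩ := ih
      set g : ℂ → ℂ := fun w => c * (a * mm s w + b) with hgdef
      have hgc : Continuous g := by
        apply continuous_const.mul
        exact (continuous_const.mul (mm_cont s)).add continuous_const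
      have hgne : ∀ w ∈ B, (g w).im ≠ -1 := by
        intro w hw heq
        have h1 : (ttm c)^[n+1] w = ttm c ((ttm c)^[n] w) := Function.iterate_succ_apply' _ _ _
        have h2 : c * (ttm c)^[n] w = g w := by rw [hf w hw]
        have h3 : ttm c ((ttm c)^[n] w) = c * (ttm c)^[n] w :=
          if_pos (by rw [h2, heq])
        exact hcon (n+1) (Nat.succ_pos n) w (hBU hw) (by rw [h1, h3, h2, heq])
      have hsub : B ⊆ {w | (g w).im < -1} ∪ {w | -1 < (g w).im} := by
        intro w hw
        rcases lt_or_gt_of_ne (hgne w hw) with h' | h'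
        · exact Or.inl h'
        · exact Or.inr h'
      have hconn : IsPreconnected B := (convex_ball z ε).isPreconnected
      have hopen1 : IsOpen {w : ℂ | (g w).im < -1} :=
        isOpen_lt (Complex.continuous_im.comp hgc) continuous_const
      have hopen2 : IsOpen {w : ℂ | -1 < (g w).im} :=
        isOpen_lt continuous_const (Complex.continuous_im.comp hgc)
      have hdisj : Disjoint {w : ℂ | (g w).im < -1} {w : ℂ | -1 < (g w).im} := by
        rw [Set.disjoint_left]; intro w h1 h2
        simp only [Set.mem_setOf_eq] at h1 h2; linarith
      rcases hconn.subset_or_subset hopen1 hopen2 hdisj hsub with hB | hB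
      · refine ⟨!s, (starRingEnd ℂ) (c * a), (starRingEnd ℂ) (c * b) - 2 * Complex.I, ?_, ?_⟩
        · rw [Complex.norm_conj, norm_mul, ha, pow_succ]; ring
        · intro w hw
          rw [Function.iterate_succ_apply', hf w hw]
          rw [show ttm c (a * mm s w + b) = (starRingEnd ℂ) (c * (a * mm s w + b)) - 2 * Complex.I
            from if_neg (by push_neg; exact hB hw)]
          simp only [map_mul, map_add, conj_mm]
          ring
      · refine ⟨s, c * a, c * b, ?_, ?_⟩
        · rw [norm_mul, ha, pow_succ]; ring
        · intro w hw
          rw [Function.iterate_succ_apply', hf w hw]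
          rw [show ttm c (a * mm s w + b) = c * (a * mm s w + b) from if_pos (le_of_lt (hB hw))]
          ring
  obtain ⟨M, hM⟩ := isBounded_iff_forall_norm_le.mp (show Bornology.IsBounded (Set.range fun n : ℕ => (ttm c)^[n] z) from hz)
  have hMz : ∀ n : ℕ, ‖(ttm c)^[n] z‖ ≤ M := fun n => hM _ ⟨n, rfl⟩
  obtain ⟨n, hn⟩ := pow_unbounded_of_one_lt (max ((M + 1) * (2 / ε)) 1) h
  have hn0 : 0 < n := by
    rcases Nat.eq_zero_or_pos n with rfl | hpos
    · simp only [pow_zero] at hn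
      have := le_max_right ((M + 1) * (2 / ε)) 1
      linarith
    · exact hpos
  have hR : M + 1 < ‖c‖ ^ n * (ε / 2) := by
    have h1 : (M + 1) * (2 / ε) < ‖c‖ ^ n := lt_of_le_of_lt (le_max_left _ _) hn
    have h2 := mul_lt_mul_of_pos_right h1 (by positivity : (0:ℝ) < ε / 2)
    have heq : (M + 1) * (2 / ε) * (ε / 2) = M + 1 := by field_simp
    linarith
  obtain ⟨s, a, b, ha, hf⟩ := key n
  have ha0 : a ≠ 0 := by
    intro h0
    have hpos : (0:ℝ) < ‖c‖ ^ n := by positivity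
    rw [h0, norm_zero] at ha
    linarith
  set r : ℝ := ‖c‖ ^ n * (ε / 2) with hrdef
  have hr0 : 0 ≤ r := by positivity
  set p : ℂ := (ttm c)^[n] z - (r : ℝ) * Complex.I with hp
  set w : ℂ := mm s ((p - b) / a) with hw
  have hwB : w ∈ B := by
    rw [hBdef, Metric.mem_ball, Complex.dist_eq]
    have hz' : mm s z = ((ttm c)^[n] z - b) / a := by
      rw [hf z hzB]; field_simp; ring
    have hwz : w - z = mm s ((p - b) / a - (((ttm c)^[n] z - b) / a)) := by
      rw [mm_sub, ← hz', mm_invol, hw]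
    rw [hwz, mm_abs]
    have : (p - b) / a - ((ttm c)^[n] z - b) / a = (-(r : ℝ) * Complex.I) / a := by
      rw [hp]; ring
    rw [this, norm_div, ha]
    rw [norm_mul]
    simp only [norm_neg, Complex.norm_real, Real.norm_eq_abs, Complex.norm_I, mul_one]
    rw [abs_of_nonneg hr0, hrdef]
    have hcn : (0:ℝ) < ‖c‖ ^ n := by positivity
    rw [mul_comm (‖c‖ ^ n) (ε / 2), mul_div_assoc, div_self (ne_of_gt hcn), mul_one]
    linarith
  have hfw : (ttm c)^[n] w = p := by
    rw [hf w hwB, hw, mm_invol]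
    field_simp; ring
  have him : -1 ≤ ((ttm c)^[n] w).im := by
    obtain ⟨m, rfl⟩ := Nat.exists_eq_succ_of_ne_zero hn0.ne'
    rw [Function.iterate_succ_apply']
    exact ttm_im_ge c _
  have himz : ((ttm c)^[n] z).im ≤ M := by
    have h1 : |((ttm c)^[n] z).im| ≤ ‖(ttm c)^[n] z‖ := Complex.abs_im_le_norm _
    have := hMz n
    have := abs_le.mp (h1.trans this)
    exact this.2
  have himp : p.im < -1 := by
    rw [hp]
    simp only [Complex.sub_im, Complex.mul_im, Complex.ofReal_re, Complex.I_im,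
      Complex.ofReal_im, Complex.I_re, mul_one, mul_zero, add_zero]
    linarith
  rw [hfw] at him
  linarith
end
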